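/- Let O be a commutative ring and n ≥ 1. For each i ∈ {1,…,n} let Gᵢ be a group, Cᵢ a Gᵢ-graded Gᵢ-acted O-algebra, and Aᵢ a Gᵢ-graded crossed product that is a Gᵢ-graded algebra over Cᵢ with structure map ζᵢ : Cᵢ → C_{Aᵢ}(Bᵢ), where Bᵢ = A_{i,1}. Then 𝐀 := A₁ ⊗ … ⊗ Aₙ is a 𝐆-graded algebra over 𝐂 := C₁ ⊗ … ⊗ Cₙ, where 𝐆 := G₁ × … × Gₙ, with structure map ζ defined by ζ(c₁ ⊗ … ⊗ cₙ) := ζ₁(c₁) ⊗ … ⊗ ζₙ(cₙ). That is: ζ is an O-algebra homomorphism from 𝐂 into the centralizer C_𝐀(𝐁) of the identity component 𝐁 := B₁ ⊗ … ⊗ Bₙ of 𝐀; ζ maps the component 𝐂_g into C_𝐀(𝐁) ∩ 𝐀_g for every g ∈ 𝐆; and ζ(^{g}c) = ^{g}ζ(c) for every g ∈ 𝐆 and c ∈ 𝐂. -/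
import Mathlib


open scoped TensorProduct
open PiTensorProduct

/-- `𝒜` is a `G`-grading of the `O`-algebra `A`. -/
def IsAlgebraGrading (O : Type*) [CommRing O] {G : Type*} [Group G] {A : Type*}
    [Ring A] [Algebra O A] (𝒜 : G → Submodule O A) : Prop :=
  (1 : A) ∈ 𝒜 1 ∧
  (∀ ⦃g h : G⦄, ∀ a ∈ 𝒜 g, ∀ b ∈ 𝒜 h, a * b ∈ 𝒜 (g * h)) ∧
  (letI := Classical.decEq G; DirectSum.IsInternal 𝒜)

/-- `𝒜` is a `G`-graded crossed product structure on the `O`-algebra `A`. -/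
def IsCrossedProduct (O : Type*) [CommRing O] {G : Type*} [Group G] {A : Type*}
    [Ring A] [Algebra O A] (𝒜 : G → Submodule O A) : Prop :=
  IsAlgebraGrading O 𝒜 ∧ ∀ g : G, ∃ u : Aˣ, (u : A) ∈ 𝒜 g

/-- `(𝒞, φ)` is a `G`-graded `G`-acted structure on the `O`-algebra `C`. -/
def IsGradedActedAlgebra (O : Type*) [CommRing O] {G : Type*} [Group G] {C : Type*}
    [Ring C] [Algebra O C] (𝒞 : G → Submodule O C) (φ : G →* (C ≃ₐ[O] C)) : Prop :=
  IsAlgebraGrading O 𝒞 ∧ ∀ (g h : G), ∀ c ∈ 𝒞 h, φ g c ∈ 𝒞 (g * h * g⁻¹)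

/-- `ζ : C →ₐ[O] A` is a structure map making the `G`-graded algebra `A`
(with grading `𝒜`) a `G`-graded algebra over the `G`-graded `G`-acted algebra
`C` (with grading `𝒞` and action `φ`): `ζ` takes values in the centralizer
of the identity component `B = 𝒜 1`, maps `𝒞 g` into the `g`-component of the
centralizer, and is equivariant, where `G` acts on the centralizer by
conjugation with invertible homogeneous elements. -/
def IsGradedAlgebraOver (O : Type*) [CommRing O] {G : Type*} [Group G]
    {A C : Type*} [Ring A] [Algebra O A] [Ring C] [Algebra O C]
    (𝒜 : G → Submodule O A) (𝒞 : G → Submodule O C) (φ : G →* (C ≃ₐ[O] C))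
    (ζ : C →ₐ[O] A) : Prop :=
  (∀ (c : C), ∀ b ∈ 𝒜 1, ζ c * b = b * ζ c) ∧
  (∀ g : G, ∀ c ∈ 𝒞 g, ζ c ∈ 𝒜 g) ∧
  (∀ (g : G) (u : Aˣ), (u : A) ∈ 𝒜 g → ∀ c : C, ζ (φ g c) = ↑u * ζ c * ↑u⁻¹)

/-- The componentwise grading on a tensor product of graded algebras. -/
def tensorGrading (O : Type*) [CommRing O] {n : ℕ} {G : Fin n → Type*} [∀ i, Group (G i)]
    {A : Fin n → Type*} [∀ i, Ring (A i)] [∀ i, Algebra O (A i)]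
    (𝒜 : ∀ i, G i → Submodule O (A i)) (g : ∀ i, G i) : Submodule O (⨂[O] i, A i) :=
  Submodule.span O {x | ∃ a : ∀ i, A i, (∀ i, a i ∈ 𝒜 i (g i)) ∧ x = tprod O a}

open DirectSum in
/-- In a group-graded algebra, the inverse of a homogeneous unit of degree `g`
is homogeneous of degree `g⁻¹`. -/
lemma unit_inv_mem' {O : Type*} [CommRing O] {G : Type*} [Group G] {A : Type*}
    [Ring A] [Algebra O A] {𝒜 : G → Submodule O A} (h : IsAlgebraGrading O 𝒜)
    {u : Aˣ} {g : G} (hu : (u : A) ∈ 𝒜 g) : ((u⁻¹ : Aˣ) : A) ∈ 𝒜 g⁻¹ := by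
  letI := Classical.decEq G
  letI : DecidableEq (Additive G) := Classical.decEq G
  set ℬ : Additive G → Submodule O A := fun i => 𝒜 i.toMul with hB
  haveI gm : SetLike.GradedMonoid ℬ :=
    { one_mem := h.1, mul_mem := fun {i j} a b ha hb => h.2.1 a ha b hb }
  have hint : DirectSum.IsInternal ℬ := h.2.2
  haveI : GradedRing ℬ := { gm, hint.chooseDecomposition with }
  letI : ∀ (i : Additive G) (x : ℬ i), Decidable (x ≠ 0) := fun _ x => Classical.dec _
  set g' : Additive G := Additive.ofMul g with hg'
  have hu' : (u : A) ∈ ℬ g' := hu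
  have key : ∀ j : Additive G, j ≠ -g' → (decompose ℬ ((u⁻¹ : Aˣ) : A) j : A) = 0 := by
    intro j hj
    have h1 : (decompose ℬ ((u : A) * ((u⁻¹ : Aˣ) : A)) (g' + j) : A)
        = (u : A) * (decompose ℬ ((u⁻¹ : Aˣ) : A) j : A) :=
      coe_decompose_mul_add_of_left_mem ℬ hu'
    have h2 : (u : A) * ((u⁻¹ : Aˣ) : A) = 1 := u.mul_inv
    have h3 : (0 : Additive G) ≠ g' + j := by
      intro hq
      apply hj
      have := congrArg (fun x => -g' + x) hq
      simpa [add_comm, ← add_assoc] using this.symm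
    have h4 : (decompose ℬ (1 : A) (g' + j) : A) = 0 :=
      decompose_of_mem_ne ℬ (SetLike.one_mem_graded ℬ) h3
    rw [h2, h4] at h1
    calc (decompose ℬ ((u⁻¹ : Aˣ) : A) j : A)
        = ((u⁻¹ : Aˣ) : A) * ((u : A) * (decompose ℬ ((u⁻¹ : Aˣ) : A) j : A)) := by
          rw [← mul_assoc, u.inv_mul, one_mul]
      _ = 0 := by rw [← h1, mul_zero]
  have hsum := DirectSum.sum_support_decompose ℬ ((u⁻¹ : Aˣ) : A)
  rw [← hsum]
  refine Submodule.sum_mem _ fun j hjs => ?_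
  by_cases hj : j = -g'
  · subst hj
    exact (decompose ℬ ((u⁻¹ : Aˣ) : A) (-g')).2
  · rw [key j hj]; exact zero_mem _

/-- The tensor grading is multiplicative. -/
lemma tensorGrading_mul_mem {O : Type*} [CommRing O] {n : ℕ} {G : Fin n → Type*}
    [∀ i, Group (G i)] {A : Fin n → Type*} [∀ i, Ring (A i)] [∀ i, Algebra O (A i)]
    {𝒜 : ∀ i, G i → Submodule O (A i)}
    (hmul : ∀ i, ∀ ⦃g h : G i⦄, ∀ a ∈ 𝒜 i g, ∀ b ∈ 𝒜 i h, a * b ∈ 𝒜 i (g * h))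
    {g h : ∀ i, G i} {x y : ⨂[O] i, A i}
    (hx : x ∈ tensorGrading O 𝒜 g) (hy : y ∈ tensorGrading O 𝒜 h) :
    x * y ∈ tensorGrading O 𝒜 (g * h) := by
  induction hx using Submodule.span_induction with
  | mem x hx =>
    obtain ⟨a, ha, rfl⟩ := hx
    induction hy using Submodule.span_induction with
    | mem y hy =>
      obtain ⟨b, hb, rfl⟩ := hy
      rw [tprod_mul_tprod]
      exact Submodule.subset_span ⟨_, fun i => hmul i _ (ha i) _ (hb i), rfl⟩
    | zero => rw [mul_zero]; exact zero_mem _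
    | add y z _ _ hy hz => rw [mul_add]; exact add_mem hy hz
    | smul r y _ hy => rw [mul_smul_comm]; exact Submodule.smul_mem _ _ hy
  | zero => rw [zero_mul]; exact zero_mem _
  | add x z _ _ hx hz => rw [add_mul]; exact add_mem hx hz
  | smul r x _ hx => rw [smul_mul_assoc]; exact Submodule.smul_mem _ _ hx

theorem stmt3 (O : Type*) [CommRing O] (n : ℕ) (hn : 1 ≤ n)
    (G : Fin n → Type*) [∀ i, Group (G i)]
    (A : Fin n → Type*) [∀ i, Ring (A i)] [∀ i, Algebra O (A i)]
    (C : Fin n → Type*) [∀ i, Ring (C i)] [∀ i, Algebra O (C i)]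
    (𝒜 : ∀ i, G i → Submodule O (A i))
    (𝒞 : ∀ i, G i → Submodule O (C i)) (φ : ∀ i, G i →* (C i ≃ₐ[O] C i))
    (ζ : ∀ i, C i →ₐ[O] A i)
    (h𝒜 : ∀ i, IsCrossedProduct O (𝒜 i))
    (h𝒞 : ∀ i, IsGradedActedAlgebra O (𝒞 i) (φ i))
    (hζ : ∀ i, IsGradedAlgebraOver O (𝒜 i) (𝒞 i) (φ i) (ζ i))
    -- the componentwise action of `𝐆 = Π i, G i` on `𝐂 = C₁ ⊗ … ⊗ Cₙ`
    (Φ : (∀ i, G i) →* ((⨂[O] i, C i) ≃ₐ[O] ⨂[O] i, C i))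
    (hΦ : ∀ (g : ∀ i, G i) (c : ∀ i, C i),
      Φ g (tprod O c) = tprod O (fun i => φ i (g i) (c i))) :
    ∃ Z : (⨂[O] i, C i) →ₐ[O] (⨂[O] i, A i),
      (∀ c : ∀ i, C i, Z (tprod O c) = tprod O (fun i => ζ i (c i))) ∧
      IsGradedAlgebraOver O (tensorGrading O 𝒜) (tensorGrading O 𝒞) Φ Z := by
  classical
  set f : MultilinearMap O C (⨂[O] i, A i) :=
    (PiTensorProduct.tprod O).compLinearMap (fun i => (ζ i).toLinearMap) with hf
  have hfapp : ∀ c : ∀ i, C i, f c = tprod O fun i => ζ i (c i) := fun c => rfl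
  have hone : f 1 = 1 := by
    rw [hfapp, PiTensorProduct.one_def]
    congr 1; funext i; simp
  have hmulf : ∀ x y, f (x * y) = f x * f y := by
    intro x y
    rw [hfapp, hfapp, hfapp, tprod_mul_tprod]
    congr 1; funext i; simp
  set Z := PiTensorProduct.liftAlgHom f hone hmulf with hZdef
  have hZt : ∀ c : ∀ i, C i, Z (tprod O c) = tprod O fun i => ζ i (c i) := by
    intro c
    show PiTensorProduct.lift f (tprod O c) = _
    rw [PiTensorProduct.lift.tprod]; exact hfapp c
  -- property 1 : Z takes values in the centralizer of the identity component
  have prop1 : ∀ b ∈ tensorGrading O 𝒜 1, ∀ x, Z x * b = b * Z x := by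
    intro b hb
    induction hb using Submodule.span_induction with
    | mem b hbmem =>
      obtain ⟨a, ha, rfl⟩ := hbmem
      intro x
      induction x using PiTensorProduct.induction_on with
      | smul_tprod r c =>
        rw [map_smul, smul_mul_assoc, mul_smul_comm, hZt, tprod_mul_tprod,
          tprod_mul_tprod]
        congr 2
        funext i
        exact (hζ i).1 (c i) (a i) (ha i)
      | add x y hx hy => rw [map_add, add_mul, mul_add, hx, hy]
    | zero => intro x; rw [mul_zero, zero_mul]
    | add b1 b2 _ _ h1 h2 => intro x; rw [mul_add, add_mul, h1 x, h2 x]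
    | smul r b _ h1 => intro x; rw [mul_smul_comm, smul_mul_assoc, h1 x]
  refine ⟨Z, hZt, fun c b hb => prop1 b hb c, ?_, ?_⟩
  -- property 2 : Z is graded
  · intro g c hc
    induction hc using Submodule.span_induction with
    | mem c hcmem =>
      obtain ⟨c', hc', rfl⟩ := hcmem
      rw [hZt]
      exact Submodule.subset_span ⟨_, fun i => (hζ i).2.1 (g i) (c' i) (hc' i), rfl⟩
    | zero => rw [map_zero]; exact zero_mem _
    | add _ _ _ _ h1 h2 => rw [map_add]; exact add_mem h1 h2
    | smul r _ _ h1 => rw [map_smul]; exact Submodule.smul_mem _ _ h1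
  -- property 3 : Z is equivariant
  · intro g u hu c
    choose uu huu using fun i => (h𝒜 i).2 (g i)
    set tu : ⨂[O] i, A i := tprod O fun i => ((uu i : A i)) with htu
    set tv : ⨂[O] i, A i := tprod O fun i => (((uu i)⁻¹ : (A i)ˣ) : A i) with htv
    have htutv : tu * tv = 1 := by
      rw [htu, htv, tprod_mul_tprod, PiTensorProduct.one_def]
      congr 1; funext i; exact (uu i).mul_inv
    have htvtu : tv * tu = 1 := by
      rw [htu, htv, tprod_mul_tprod, PiTensorProduct.one_def]
      congr 1; funext i; exact (uu i).inv_mul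
    have stepA : Z (Φ g c) = tu * Z c * tv := by
      induction c using PiTensorProduct.induction_on with
      | smul_tprod r c' =>
        rw [map_smul, map_smul, map_smul, mul_smul_comm, smul_mul_assoc]
        congr 1
        rw [hΦ, hZt, hZt, htu, htv, tprod_mul_tprod, tprod_mul_tprod]
        congr 1
        funext i
        exact (hζ i).2.2 (g i) (uu i) (huu i) (c' i)
      | add x y hx hy =>
        rw [map_add, map_add, map_add, hx, hy, mul_add, add_mul]
    have stepB : tv ∈ tensorGrading O 𝒜 g⁻¹ :=
      Submodule.subset_span
        ⟨_, fun i => unit_inv_mem' (h𝒜 i).1 (huu i), rfl⟩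
    have stepC : tv * (u : ⨂[O] i, A i) ∈ tensorGrading O 𝒜 1 := by
      have := tensorGrading_mul_mem (fun i => (h𝒜 i).1.2.1) stepB hu
      rwa [inv_mul_cancel] at this
    have stepD : Z c * (tv * (u : ⨂[O] i, A i))
        = (tv * (u : ⨂[O] i, A i)) * Z c := prop1 _ stepC c
    -- conclude
    rw [stepA]
    have e1 : (u : ⨂[O] i, A i) * Z c = tu * Z c * tv * (u : ⨂[O] i, A i) := by
      calc (u : ⨂[O] i, A i) * Z c
          = tu * (tv * (u : ⨂[O] i, A i) * Z c) := by
            rw [← mul_assoc, ← mul_assoc, htutv, one_mul]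
        _ = tu * (Z c * (tv * (u : ⨂[O] i, A i))) := by
            rw [mul_assoc tv, stepD, mul_assoc]
        _ = tu * Z c * tv * (u : ⨂[O] i, A i) := by
            rw [← mul_assoc, ← mul_assoc]
    calc tu * Z c * tv
        = tu * Z c * tv * ((u : ⨂[O] i, A i) * ((u⁻¹ : (⨂[O] i, A i)ˣ) : ⨂[O] i, A i)) := by
          rw [u.mul_inv, mul_one]
      _ = (tu * Z c * tv * (u : ⨂[O] i, A i)) * ((u⁻¹ : (⨂[O] i, A i)ˣ) : ⨂[O] i, A i) := by
          rw [← mul_assoc]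
      _ = (u : ⨂[O] i, A i) * Z c * ((u⁻¹ : (⨂[O] i, A i)ˣ) : ⨂[O] i, A i) := by
          rw [← e1]
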